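/- arXiv:0706.3246 — 2 statements merged into one kernel-verified Lean document; each statement's English description precedes it below -/
import Mathlib

section
/- Let G be a finite group, D = {g ∈ G : [g, G'] ⊆ Z(G)}, and let P be a Sylow p-subgroup of D. Then the quotient G'/C_{G'}(P) is a p-group. -/
/-!
For `g` in the Sylow subgroup `P` and `k ∈ G'` the commutator `⁅g, k⁆` is central, so
`k ↦ (g ↦ ⁅g, k⁆)` is a homomorphism from `G'` to the functions `P → G` whose kernel is
`C_{G'}(P)`. Centrality also gives `⁅g, k⁆ ^ m = ⁅g ^ m, k⁆`, so the image has exponent dividing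
`|P|`, and hence `G' / C_{G'}(P)` is a `p`-group.
-/

open scoped commutatorElement

section

open Subgroup

variable {G : Type*} [Group G]

theorem commutatorElement_mul_right_of_mem_center {g k₁ k₂ : G} (h : ⁅g, k₂⁆ ∈ center G) :
    ⁅g, k₁ * k₂⁆ = ⁅g, k₁⁆ * ⁅g, k₂⁆ := by
  rw [commutatorElement_mul_right_eq_mul_conj, mul_assoc ⁅g, k₁⁆ k₁, mem_center_iff.mp h k₁,
    ← mul_assoc, mul_inv_cancel_right]

theorem commutatorElement_pow_left_of_mem_center {g k : G} (h : ⁅g, k⁆ ∈ center G) (n : ℕ) :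
    ⁅g ^ n, k⁆ = ⁅g, k⁆ ^ n := by
  induction n with
  | zero => simp
  | succ n ih =>
    rw [pow_succ', commutatorElement_mul_left_eq_conj_mul, ih,
      mem_center_iff.mp (pow_mem h n) g, mul_inv_cancel_right, pow_succ]

def centralCommutatorHom (S : Set G) (H : Subgroup G)
    (hSH : ∀ g ∈ S, ∀ k ∈ H, ⁅g, k⁆ ∈ center G) : H →* (S → G) where
  toFun k g := ⁅(g : G), (k : G)⁆
  map_one' := funext fun _ => commutatorElement_one_right _
  map_mul' _ k₂ := funext fun g =>
    commutatorElement_mul_right_of_mem_center (hSH g g.2 k₂ k₂.2)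

theorem ker_centralCommutatorHom (S : Set G) (H : Subgroup G)
    (hSH : ∀ g ∈ S, ∀ k ∈ H, ⁅g, k⁆ ∈ center G) :
    (centralCommutatorHom S H hSH).ker = (centralizer S).subgroupOf H := by
  ext k
  simp only [MonoidHom.mem_ker, mem_subgroupOf, mem_centralizer_iff, funext_iff]
  exact ⟨fun h g hg => commutatorElement_eq_one_iff_mul_comm.mp (h ⟨g, hg⟩),
    fun h g => commutatorElement_eq_one_iff_mul_comm.mpr (h g g.2)⟩

theorem centralCommutatorHom_pow_eq_one (S : Set G) (H : Subgroup G)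
    (hSH : ∀ g ∈ S, ∀ k ∈ H, ⁅g, k⁆ ∈ center G) {n : ℕ} (hn : ∀ g ∈ S, g ^ n = 1) (k : H) :
    centralCommutatorHom S H hSH k ^ n = 1 := funext fun g => by
  change ⁅(g : G), (k : G)⁆ ^ n = 1
  rw [← commutatorElement_pow_left_of_mem_center (hSH g g.2 k k.2), hn g g.2,
    commutatorElement_one_left]

theorem IsPGroup.exists_index_centralizer_subgroupOf_eq_pow {p : ℕ} [Fact p.Prime] [Finite G]
    {Q : Subgroup G} (hQ : IsPGroup p Q) (H : Subgroup G)
    (hQH : ∀ g ∈ Q, ∀ k ∈ H, ⁅g, k⁆ ∈ center G) :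
    ∃ n : ℕ, ((centralizer (Q : Set G)).subgroupOf H).index = p ^ n := by
  obtain ⟨N, hN⟩ := IsPGroup.iff_card.mp hQ
  have hQ_pow : ∀ g ∈ (Q : Set G), g ^ p ^ N = 1 := fun g hg => by
    have := pow_card_eq_one' (x := (⟨g, hg⟩ : Q))
    rwa [hN, Subtype.ext_iff, coe_pow] at this
  have h_range : IsPGroup p (centralCommutatorHom (Q : Set G) H hQH).range := by
    rintro ⟨_, k, rfl⟩
    exact ⟨N, Subtype.ext (centralCommutatorHom_pow_eq_one _ H hQH hQ_pow k)⟩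
  obtain ⟨n, hn⟩ := IsPGroup.iff_card.mp h_range
  exact ⟨n, by rw [← ker_centralCommutatorHom _ H hQH, index_ker, hn]⟩

end

theorem stmt_15 (p : ℕ) [Fact p.Prime] (G : Type*) [Group G] [Finite G]
    (D : Subgroup G)
    (hD : ∀ g : G, g ∈ D ↔ ∀ h ∈ commutator G, ⁅g, h⁆ ∈ Subgroup.center G)
    (P : Sylow p D) :
    ∃ n : ℕ,
      ((Subgroup.centralizer (((P : Subgroup D).map D.subtype : Subgroup G) : Set G)).subgroupOf
          (commutator G)).index = p ^ n := by
  refine IsPGroup.exists_index_centralizer_subgroupOf_eq_pow (P.isPGroup'.map D.subtype) _ ?_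
  rintro _ ⟨d, -, rfl⟩ k hk
  exact (hD d).mp d.2 k hk
end

section
/- Let G be a finite group, D = {g ∈ G : [g, G'] ⊆ Z(G)}, Z = G' ∩ Z(G), and suppose rk(G'/Z) = r. Then |D : C_G(G')| ≤ |G' : Z|^(2r). -/
/-- The rank of a group: the minimal number `r` such that every subgroup
can be generated by `r` elements. -/
noncomputable def grpRank (G : Type*) [Group G] : ℕ :=
  sInf {r : ℕ | ∀ H : Subgroup G, ∃ S : Finset G, S.card ≤ r ∧ Subgroup.closure (S : Set G) = H}

open scoped commutatorElement

/-!
The map `u ↦ ⁅u, ·⁆` is a homomorphism from `D` to `Hom(G', Z(G))` with kernel `C_D(G')`, so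
`|D : C_D(G')|` is the order of its image `X`. If `⁅a, u⁆` and `⁅b, u⁆` are central then `u`
centralizes `⁅a, b⁆`; hence `u ↦ ⁅u, ⁅a, b⁆⁆` factors through `D → (G'/Z)²` and takes at most
`|G' : Z|²` values. Prime by prime, let `P` be a Sylow `p`-subgroup of `X`. The quotient of
`G'` by the common kernel of `P` is an abelian `p`-group, generated by images of commutators and
by at most `r` elements, so by the Burnside basis theorem by the images of `r` commutators
`⁅aᵢ, bᵢ⁆`. An element of `P` is determined by its values at these, so `|P|` divides
`(|G' : Z|²)^r`.
-/

open Subgroup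

theorem Subgroup.closure_image_eq_top_of_surjective {G H : Type*} [Group G] [Group H]
    {f : G →* H} (hf : Function.Surjective f) {s : Set G} (hs : closure s = ⊤) :
    closure (f '' s) = ⊤ := by
  rw [← MonoidHom.map_closure, hs, map_top_of_surjective f hf]

section PGroup

variable {U : Type*} [Group U] {p : ℕ}

theorem IsPGroup.mul_card_le_card_of_lt [Fact p.Prime] [Finite U] (hU : IsPGroup p U)
    {H K : Subgroup U} (hHK : H < K) : p * Nat.card H ≤ Nat.card K := by
  obtain ⟨a, ha⟩ := IsPGroup.iff_card.mp (hU.to_subgroup H)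
  obtain ⟨b, hb⟩ := IsPGroup.iff_card.mp (hU.to_subgroup K)
  have hp := (Fact.out : p.Prime).one_lt
  have hlt : p ^ a < p ^ b := ha ▸ hb ▸ (card_le_of_le hHK.le).lt_of_ne
    fun h ↦ hHK.ne (eq_of_le_of_card_ge hHK.le h.ge)
  rw [ha, hb, ← pow_succ']
  exact Nat.pow_le_pow_right hp.le ((Nat.pow_lt_pow_iff_right hp).mp hlt)

theorem IsPGroup.exists_finset_card_le_closure_image_sup_eq_top [Fact p.Prime] [Finite U]
    (hU : IsPGroup p U) {ι : Type*} {f : ι → U} (hf : closure (Set.range f) = ⊤) (k : ℕ)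
    (W : Subgroup U) (hW : Nat.card U ≤ p ^ k * Nat.card W) :
    ∃ T : Finset ι, T.card ≤ k ∧ closure (f '' T) ⊔ W = ⊤ := by
  classical
  induction k generalizing W with
  | zero => exact ⟨∅, by simp, by simpa using W.eq_top_of_le_card (by simpa using hW)⟩
  | succ k ih =>
    by_cases hWtop : W = ⊤
    · exact ⟨∅, by simp, by simp [hWtop]⟩
    obtain ⟨i, hi⟩ : ∃ i, f i ∉ W := by
      by_contra! h
      exact hWtop (top_le_iff.mp (hf ▸ (closure_le W).mpr (Set.range_subset_iff.mpr h)))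
    have hlt : W < zpowers (f i) ⊔ W :=
      lt_of_le_of_ne le_sup_right fun h ↦ hi (h ▸ mem_sup_left (mem_zpowers (f i)))
    obtain ⟨T, hT, hTtop⟩ := ih (zpowers (f i) ⊔ W) <| calc
      Nat.card U ≤ p ^ k * (p * Nat.card W) := by rw [← mul_assoc, ← pow_succ]; exact hW
      _ ≤ p ^ k * Nat.card ↥(zpowers (f i) ⊔ W) := by
        gcongr; exact hU.mul_card_le_card_of_lt hlt
    refine ⟨insert i T, (Finset.card_insert_le i T).trans (by omega), top_le_iff.mp ?_⟩
    rw [← hTtop, Finset.coe_insert, Set.image_insert_eq, ← sup_assoc, zpowers_eq_closure,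
      ← Subgroup.closure_union, Set.union_comm, ← Set.insert_eq]

end PGroup

section CommGroup

variable {U : Type*} [CommGroup U] {p : ℕ}

theorem Subgroup.card_sup_le_card_mul_card (H K : Subgroup U) :
    Nat.card ↥(H ⊔ K) ≤ Nat.card H * Nat.card K := by
  change Nat.card ((H ⊔ K : Subgroup U) : Set U) ≤ _
  rw [mul_normal]
  exact Set.natCard_mul_le

theorem Subgroup.card_closure_le_pow_card (hp : 0 < p) (hexp : ∀ u : U, u ^ p = 1)
    (T : Finset U) : Nat.card (closure (T : Set U)) ≤ p ^ T.card := by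
  classical
  induction T using Finset.induction_on with
  | empty => simp
  | insert a T ha ih =>
    rw [Finset.coe_insert, Set.insert_eq, closure_union, Finset.card_insert_of_notMem ha,
      pow_succ']
    refine (card_sup_le_card_mul_card _ _).trans (Nat.mul_le_mul ?_ ih)
    rw [← zpowers_eq_closure, Nat.card_zpowers]
    exact orderOf_le_of_pow_eq_one hp (hexp a)

theorem card_le_pow_mul_card_range_powMonoidHom (hp : 0 < p) {T : Finset U}
    (hT : closure (T : Set U) = ⊤) :
    Nat.card U ≤ p ^ T.card * Nat.card (powMonoidHom p : U →* U).range := by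
  classical
  set Up := (powMonoidHom p : U →* U).range
  have hexp (u : U ⧸ Up) : u ^ p = 1 := by
    induction u using QuotientGroup.induction_on with
    | H z => rw [← QuotientGroup.mk_pow, QuotientGroup.eq_one_iff]; exact ⟨z, rfl⟩
  have hgen : closure (QuotientGroup.mk' Up '' T) = ⊤ :=
    closure_image_eq_top_of_surjective (QuotientGroup.mk'_surjective Up) hT
  rw [card_eq_card_quotient_mul_card_subgroup Up, ← card_top (G := U ⧸ Up), ← hgen,
    ← Finset.coe_image]
  gcongr
  exact (card_closure_le_pow_card hp hexp _).trans (Nat.pow_le_pow_right hp Finset.card_image_le)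

theorem IsPGroup.eq_top_of_sup_range_powMonoidHom_eq_top [Fact p.Prime] [Finite U]
    (hU : IsPGroup p U) {H : Subgroup U} (hH : H ⊔ (powMonoidHom p : U →* U).range = ⊤) :
    H = ⊤ := by
  have hpow (i : ℕ) (u : U) : ∃ h ∈ H, ∃ v : U, h * v ^ p ^ i = u := by
    induction i generalizing u with
    | zero => exact ⟨1, one_mem H, u, by simp⟩
    | succ i ih =>
      obtain ⟨h, hh, v, rfl⟩ := ih u
      obtain ⟨h', hh', _, ⟨w, rfl⟩, rfl⟩ := mem_sup.mp (hH ▸ mem_top v)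
      refine ⟨h * h' ^ p ^ i, mul_mem hh (pow_mem hh' _), w, ?_⟩
      simp only [powMonoidHom_apply, mul_pow, ← pow_mul, pow_succ', mul_assoc]
  obtain ⟨m, hm⟩ := IsPGroup.iff_card.mp hU
  refine eq_top_iff.mpr fun u _ ↦ ?_
  obtain ⟨h, hh, v, rfl⟩ := hpow m u
  rwa [← hm, pow_card_eq_one', mul_one]

/-- The Burnside basis theorem for finite abelian `p`-groups. -/
theorem IsPGroup.exists_finset_card_le_closure_image_eq_top [Fact p.Prime] [Finite U]
    (hU : IsPGroup p U) {ι : Type*} {f : ι → U} (hf : closure (Set.range f) = ⊤)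
    {T₀ : Finset U} (hT₀ : closure (T₀ : Set U) = ⊤) :
    ∃ T : Finset ι, T.card ≤ T₀.card ∧ closure (f '' T) = ⊤ := by
  obtain ⟨T, hT, hsup⟩ := hU.exists_finset_card_le_closure_image_sup_eq_top hf T₀.card _
    (card_le_pow_mul_card_range_powMonoidHom (Fact.out : p.Prime).pos hT₀)
  exact ⟨T, hT, hU.eq_top_of_sup_range_powMonoidHom_eq_top hsup⟩

end CommGroup

section Evaluation

variable {M N : Type*} [Group M] [CommGroup N]

def Subgroup.evalHom (P : Subgroup (M →* N)) : M →* (P →* N) :=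
  (MonoidHom.compHom' P.subtype).comp MonoidHom.eval

theorem IsPGroup.exists_finset_card_le_forall_eq_one [Finite M] {p : ℕ} [Fact p.Prime]
    {P : Subgroup (M →* N)} [Finite P] (hP : IsPGroup p P) {ι : Type*} {g : ι → M}
    (hg : closure (Set.range g) = ⊤) {Z : Subgroup M} [Z.Normal]
    (hZ : ∀ χ ∈ P, ∀ z ∈ Z, χ z = 1) {T₀ : Finset (M ⧸ Z)}
    (hT₀ : closure (T₀ : Set (M ⧸ Z)) = ⊤) :
    ∃ T : Finset ι, T.card ≤ T₀.card ∧
      ∀ χ ∈ P, (∀ i ∈ T, χ (g i) = 1) → χ = 1 := by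
  classical
  -- The range of `P.evalHom` is `M` modulo the common kernel of `P`.
  set ev := P.evalHom.rangeRestrict
  have : Finite P.evalHom.range := Finite.of_surjective ev P.evalHom.rangeRestrict_surjective
  have hU : IsPGroup p P.evalHom.range := by
    obtain ⟨a, ha⟩ := IsPGroup.iff_card.mp hP
    refine fun u ↦ ⟨a, Subtype.ext <| MonoidHom.ext fun χ ↦ ?_⟩
    simp [MonoidHom.pow_apply, ← map_pow, ← ha, pow_card_eq_one']
  have hZev : Z ≤ ev.ker := fun z hz ↦ by
    ext χ
    exact hZ χ χ.2 z hz
  have hq := QuotientGroup.lift_surjective_of_surjective Z ev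
    P.evalHom.rangeRestrict_surjective hZev
  obtain ⟨T, hT, hTtop⟩ := hU.exists_finset_card_le_closure_image_eq_top
    (f := ev ∘ g) (Set.range_comp ev g ▸ closure_image_eq_top_of_surjective
      P.evalHom.rangeRestrict_surjective hg)
    (T₀ := T₀.image (QuotientGroup.lift Z ev hZev))
    (by rw [Finset.coe_image]; exact closure_image_eq_top_of_surjective hq hT₀)
  refine ⟨T, hT.trans Finset.card_image_le, fun χ hχ hT1 ↦ ?_⟩
  have hker : closure ((ev ∘ g) '' T) ≤ ((MonoidHom.eval ⟨χ, hχ⟩).comp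
      P.evalHom.range.subtype).ker :=
    closure_le _ |>.mpr <| by rintro _ ⟨i, hi, rfl⟩; exact hT1 i hi
  rw [hTtop, top_le_iff, MonoidHom.ker_eq_top_iff] at hker
  ext m
  exact DFunLike.congr_fun hker (ev m)

end Evaluation

open scoped IsMulCommutative

section CentralCommutators

variable {G : Type*} [Group G]

theorem commutatorElement_mul_mul_of_mem_center {z w : G} (hz : z ∈ center G)
    (hw : w ∈ center G) (a b : G) : ⁅z * a, w * b⁆ = ⁅a, b⁆ := by
  rw [mem_center_iff] at hz hw
  calc ⁅z * a, w * b⁆ = z * (a * w * b * a⁻¹) * z⁻¹ * (b⁻¹ * w⁻¹) := by group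
    _ = a * (w * (b * a⁻¹ * b⁻¹) * w⁻¹) := by rw [← hz, mul_inv_cancel_right]; group
    _ = ⁅a, b⁆ := by rw [← hw, mul_inv_cancel_right, commutatorElement_def]; group

theorem commutatorElement_commutatorElement_eq_one {a b u : G} (ha : ⁅a, u⁆ ∈ center G)
    (hb : ⁅b, u⁆ ∈ center G) : ⁅u, ⁅a, b⁆⁆ = 1 := by
  have hconj : u * ⁅a, b⁆ * u⁻¹ = ⁅⁅u, a⁆ * a, ⁅u, b⁆ * b⁆ := by group
  rw [← commutatorElement_inv] at ha hb
  rw [commutatorElement_def, hconj,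
    commutatorElement_mul_mul_of_mem_center (inv_mem_iff.mp ha) (inv_mem_iff.mp hb),
    mul_inv_cancel]

theorem commutatorElement_mem_commutator (a b : G) : ⁅a, b⁆ ∈ commutator G :=
  commutator_mem_commutator (mem_top a) (mem_top b)

def commutatorPair (ab : G × G) : commutator G :=
  ⟨⁅ab.1, ab.2⁆, commutatorElement_mem_commutator ab.1 ab.2⟩

theorem closure_range_commutatorPair : closure (Set.range (commutatorPair (G := G))) = ⊤ := by
  apply map_injective (commutator G).subtype_injective
  rw [MonoidHom.map_closure, ← Set.range_comp, ← MonoidHom.range_eq_map, range_subtype]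
  refine Eq.trans ?_ (commutator_eq_closure G).symm
  congr 1
  ext x
  simp [commutatorPair, commutatorSet]

variable {D : Subgroup G}

def commutatorCentralHom (hD : ⁅D, commutator G⁆ ≤ center G) :
    D →* (commutator G →* center G) where
  toFun u :=
    { toFun h := ⟨⁅(u : G), (h : G)⁆, hD (commutator_mem_commutator u.2 h.2)⟩
      map_one' := Subtype.ext (commutatorElement_one_right _)
      map_mul' h k := Subtype.ext <| by
        have hk := mem_center_iff.mp (hD (commutator_mem_commutator u.2 k.2))
        calc ⁅(u : G), (h : G) * k⁆
            = ⁅(u : G), (h : G)⁆ * ((h : G) * ⁅(u : G), (k : G)⁆ * (h : G)⁻¹) := by group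
          _ = ⁅(u : G), (h : G)⁆ * ⁅(u : G), (k : G)⁆ := by rw [hk, mul_inv_cancel_right] }
  map_one' := by ext h; exact commutatorElement_one_left _
  map_mul' u v := by
    ext h
    have hv := mem_center_iff.mp (hD (commutator_mem_commutator v.2 h.2))
    have hu := mem_center_iff.mp (hD (commutator_mem_commutator u.2 h.2))
    calc ⁅(u : G) * v, (h : G)⁆
        = (u : G) * ⁅(v : G), (h : G)⁆ * (u : G)⁻¹ * ⁅(u : G), (h : G)⁆ := by group
      _ = ⁅(u : G), (h : G)⁆ * ⁅(v : G), (h : G)⁆ := by rw [hv, mul_inv_cancel_right, hu]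

theorem ker_commutatorCentralHom (hD : ⁅D, commutator G⁆ ≤ center G) :
    (commutatorCentralHom hD).ker = (centralizer (commutator G : Set G)).subgroupOf D := by
  ext u
  simp [commutatorCentralHom, DFunLike.ext_iff, Subtype.ext_iff, mem_centralizer_iff,
    mem_subgroupOf, commutatorElement_eq_one_iff_mul_comm, eq_comm]

def commutatorModCenterHom (hD : ⁅D, commutator G⁆ ≤ center G) (a : G) :
    D →* commutator G ⧸ (center G).subgroupOf (commutator G) where
  toFun u := commutatorPair (a, u)
  map_one' := by simp [commutatorPair, mem_subgroupOf]
  map_mul' u v := by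
    rw [← QuotientGroup.mk_mul, QuotientGroup.eq, mem_subgroupOf]
    convert hD (commutator_mem_commutator u.2 (inv_mem (commutatorElement_mem_commutator a v)))
      using 1
    simp only [commutatorPair, coe_mul, coe_inv]
    group

theorem ker_prod_commutatorModCenterHom_le (hD : ⁅D, commutator G⁆ ≤ center G) (a b : G) :
    ((commutatorModCenterHom hD a).prod (commutatorModCenterHom hD b)).ker ≤
      ((MonoidHom.eval (commutatorPair (a, b))).comp (commutatorCentralHom hD)).ker := by
  intro u hu
  simp [commutatorModCenterHom, commutatorPair, mem_subgroupOf] at hu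
  exact Subtype.ext (commutatorElement_commutatorElement_eq_one hu.1 hu.2)

theorem card_map_eval_range_commutatorCentralHom_dvd [Finite G]
    (hD : ⁅D, commutator G⁆ ≤ center G) (ab : G × G) :
    Nat.card ((commutatorCentralHom hD).range.map (MonoidHom.eval (commutatorPair ab))) ∣
      ((center G).subgroupOf (commutator G)).index ^ 2 := by
  rw [MonoidHom.map_range, ← index_ker]
  refine (index_dvd_of_le (ker_prod_commutatorModCenterHom_le hD ab.1 ab.2)).trans ?_
  rw [index_ker, sq, index_eq_card, ← Nat.card_prod]
  exact card_subgroup_dvd_card _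

theorem card_range_commutatorCentralHom_dvd [Finite G] (hD : ⁅D, commutator G⁆ ≤ center G)
    {T₀ : Finset (commutator G ⧸ (center G).subgroupOf (commutator G))}
    (hT₀ : closure (T₀ : Set (commutator G ⧸ (center G).subgroupOf (commutator G))) = ⊤) :
    Nat.card (commutatorCentralHom hD).range ∣
      ((center G).subgroupOf (commutator G)).index ^ (2 * T₀.card) := by
  have := FunLike.finite (commutator G →* center G)
  set X := (commutatorCentralHom hD).range
  refine (Nat.dvd_iff_prime_pow_dvd_dvd _ _).mpr fun p k hp hpk ↦ ?_
  have := Fact.mk hp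
  obtain ⟨P⟩ : Nonempty (Sylow p X) := inferInstance
  set P' := (P : Subgroup X).map X.subtype
  have hP'X : P' ≤ X := map_subtype_le _
  have hZ : ∀ χ ∈ P', ∀ z ∈ (center G).subgroupOf (commutator G), χ z = 1 := by
    rintro _ hχ z hz
    obtain ⟨u, rfl⟩ := hP'X hχ
    exact Subtype.ext <| commutatorElement_eq_one_iff_mul_comm.mpr
      (mem_center_iff.mp (mem_subgroupOf.mp hz) u)
  obtain ⟨T, hT, hT1⟩ := (P.isPGroup'.map X.subtype).exists_finset_card_le_forall_eq_one
    closure_range_commutatorPair hZ hT₀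
  let F : P' →* ∀ ab : T, X.map (MonoidHom.eval (commutatorPair ab.1)) :=
    MonoidHom.pi fun ab ↦ ((MonoidHom.eval _).comp P'.subtype).codRestrict _
      fun χ ↦ mem_map_of_mem _ (hP'X χ.2)
  have hF : Function.Injective F := (injective_iff_map_eq_one F).mpr fun χ hχ ↦
    Subtype.ext (hT1 χ χ.2 fun ab hab ↦ congrArg Subtype.val (congrFun hχ ⟨ab, hab⟩))
  calc p ^ k ∣ Nat.card P := P.pow_dvd_card_of_pow_dvd_card hpk
    _ = Nat.card P' := (card_map_of_injective X.subtype_injective).symm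
    _ ∣ ∏ ab : T, Nat.card (X.map (MonoidHom.eval (commutatorPair ab.1))) := by
      rw [← Nat.card_pi]; exact card_dvd_of_injective F hF
    _ ∣ ∏ _ab : T, ((center G).subgroupOf (commutator G)).index ^ 2 :=
      Finset.prod_dvd_prod_of_dvd _ _ fun ab _ ↦
        card_map_eval_range_commutatorCentralHom_dvd hD ab.1
    _ ∣ _ := by
      rw [Finset.prod_const, Finset.card_univ, Fintype.card_coe, ← pow_mul]
      exact pow_dvd_pow _ (by omega)

end CentralCommutators

theorem exists_finset_card_le_grpRank_closure_eq {G : Type*} [Group G] [Finite G]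
    (H : Subgroup G) : ∃ S : Finset G, S.card ≤ grpRank G ∧ closure (S : Set G) = H := by
  classical
  have := Fintype.ofFinite G
  refine Nat.sInf_mem (s := {r : ℕ | ∀ K : Subgroup G, ∃ S : Finset G,
    S.card ≤ r ∧ closure (S : Set G) = K}) ⟨Fintype.card G, fun K ↦ ?_⟩ H
  exact ⟨Finset.univ.filter (· ∈ K), Finset.card_filter_le _ _, by simp⟩

theorem stmt_17 (G : Type*) [Group G] [Finite G]
    (D : Subgroup G)
    (hD : ∀ g : G, g ∈ D ↔ ∀ h ∈ commutator G, ⁅g, h⁆ ∈ Subgroup.center G)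
    (r : ℕ)
    (hr : grpRank (commutator G ⧸ (Subgroup.center G).subgroupOf (commutator G)) = r) :
    ((Subgroup.centralizer (commutator G : Set G)).subgroupOf D).index ≤
      ((Subgroup.center G).subgroupOf (commutator G)).index ^ (2 * r) := by
  have hD' : ⁅D, commutator G⁆ ≤ center G :=
    commutator_le.mpr fun g hg h hh ↦ (hD g).mp hg h hh
  obtain ⟨T₀, hT₀, hgen⟩ := exists_finset_card_le_grpRank_closure_eq
    (⊤ : Subgroup (commutator G ⧸ (center G).subgroupOf (commutator G)))
  have hn : 0 < ((center G).subgroupOf (commutator G)).index :=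
    Nat.pos_of_ne_zero index_ne_zero_of_finite
  rw [← ker_commutatorCentralHom hD', index_ker]
  calc Nat.card (commutatorCentralHom hD').range
      ≤ ((center G).subgroupOf (commutator G)).index ^ (2 * T₀.card) :=
        Nat.le_of_dvd (pow_pos hn _) (card_range_commutatorCentralHom_dvd hD' hgen)
    _ ≤ _ := Nat.pow_le_pow_right hn (by omega)
end
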